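/- arXiv:1106.1399 — 4 statements merged into one kernel-verified Lean document; each statement's English description precedes it below -/
import Mathlib

section
/- Let (S_{i,j}) be a collection of subsets of {1,…,2n} indexed by pairs (i,j) with 1 ≤ i ≤ j and i+j ≤ 2n, and let V_{i,j} = span{w_l : l ∈ S_{i,j}}. Then the collection (V_{i,j}) is a point of SpR_{2n} if and only if: (a) S_{i,j} ⊆ {1,…,i} ∪ {j+1,…,2n} and |S_{i,j}| = i for all (i,j); (b) S_{i,j} ⊆ S_{i+1,j} whenever (i+1,j) is also an index; (c) S_{i,j} ⊆ S_{i,j+1} ∪ {j+1} whenever (i,j+1) is also an index; (d) for every 1 ≤ i ≤ n, if k ∈ S_{i,2n−i} then 2n+1−k ∉ S_{i,2n−i}. -/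
noncomputable section

/-- The ambient 2n-dimensional complex vector space `W = ℂ^{2n}`. -/
abbrev Wsp (n : ℕ) := Fin (2*n) → ℂ

/-- The basis vector `w_k` (1-based index `k ∈ {1,…,2n}`). -/
def wvec (n k : ℕ) : Wsp n := fun i => if (i : ℕ) + 1 = k then 1 else 0

/-- The standard symplectic form: `⟨w_i, w_{2n+1-i}⟩ = 1` for `1 ≤ i ≤ n`,
and `⟨w_i, w_j⟩ = 0` for `j ≠ 2n+1-i`. -/
def sform (n : ℕ) (x y : Wsp n) : ℂ :=
  ∑ i : Fin (2*n), (if (i : ℕ) < n then 1 else -1) * x i *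
    y ⟨2*n - 1 - (i : ℕ), by have := i.isLt; omega⟩

/-- A subspace is isotropic if the symplectic form vanishes on it. -/
def IsIsotropic (n : ℕ) (U : Submodule ℂ (Wsp n)) : Prop :=
  ∀ u ∈ U, ∀ v ∈ U, sform n u v = 0

/-- The projection `pr_k` along `w_k` (1-based). -/
def prj (n k : ℕ) : Wsp n →ₗ[ℂ] Wsp n where
  toFun x := fun i => if (i : ℕ) + 1 = k then 0 else x i
  map_add' x y := by funext i; by_cases h : (i : ℕ) + 1 = k <;> simp [h]
  map_smul' c x := by funext i; by_cases h : (i : ℕ) + 1 = k <;> simp [h]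

/-- The subspace `W_{i,j} = span(w_1,…,w_i,w_{j+1},…,w_{2n})` (1-based). -/
def WIJ (n i j : ℕ) : Submodule ℂ (Wsp n) :=
  Submodule.span ℂ (wvec n '' {k | (1 ≤ k ∧ k ≤ i) ∨ (j + 1 ≤ k ∧ k ≤ 2*n)})

/-- Orthogonal complement with respect to the symplectic form. -/
def sperp (n : ℕ) (U : Submodule ℂ (Wsp n)) : Submodule ℂ (Wsp n) where
  carrier := {x | ∀ u ∈ U, sform n x u = 0}
  zero_mem' := by intro u hu; simp [sform]
  add_mem' := by
    intro a b ha hb u hu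
    have ha' := ha u hu
    have hb' := hb u hu
    simp only [sform, Pi.add_apply, add_mul, mul_add, Finset.sum_add_distrib] at *
    rw [ha', hb', add_zero]
  smul_mem' := by
    intro c a ha u hu
    have ha' := ha u hu
    simp only [sform, Pi.smul_apply, smul_eq_mul] at *
    calc ∑ i : Fin (2*n), (if (i : ℕ) < n then 1 else -1) * (c * a i) *
          u ⟨2*n - 1 - (i : ℕ), by have := i.isLt; omega⟩
        = c * ∑ i : Fin (2*n), (if (i : ℕ) < n then 1 else -1) * a i *
          u ⟨2*n - 1 - (i : ℕ), by have := i.isLt; omega⟩ := by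
          rw [Finset.mul_sum]; congr 1; funext i; ring
      _ = 0 := by rw [ha', mul_zero]

/-- The points of the Bott–Samelson type resolution `SpR_{2n}`:
collections `(V_{i,j})` for `1 ≤ i ≤ j`, `i+j ≤ 2n`. -/
structure IsSpR (n : ℕ) (V : ℕ → ℕ → Submodule ℂ (Wsp n)) : Prop where
  dim : ∀ i j, 1 ≤ i → i ≤ j → i + j ≤ 2*n → Module.finrank ℂ (V i j) = i
  sub : ∀ i j, 1 ≤ i → i ≤ j → i + j ≤ 2*n → V i j ≤ WIJ n i j
  mono : ∀ i j, 1 ≤ i → i + 1 ≤ j → (i + 1) + j ≤ 2*n → V i j ≤ V (i+1) j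
  proj : ∀ i j, 1 ≤ i → i ≤ j → i + (j+1) ≤ 2*n →
    Submodule.map (prj n (j+1)) (V i j) ≤ V i (j+1)
  isot : ∀ i, 1 ≤ i → i ≤ n → IsIsotropic n (V i (2*n - i))

/-- A point of `SpR_{2n}` lies in the divisor `Z_{i,j}` if
`V_{i,j} = V_{i-1,j+1} + ℂ w_{j+1}` (with `V_0 = 0`). -/
def InZ (n : ℕ) (V : ℕ → ℕ → Submodule ℂ (Wsp n)) (i j : ℕ) : Prop :=
  V i j = (if i = 1 then ⊥ else V (i-1) (j+1)) ⊔ Submodule.span ℂ {wvec n (j+1)}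

/-! Every `V_{i,j}` here is a coordinate subspace, so each condition defining `SpR_{2n}` can be
read off the index sets: inclusion of coordinate subspaces is inclusion of index sets, dimension is
cardinality, `pr_{j+1}` deletes the index `j + 1`, and the symplectic form pairs `w_k` only with
`w_{2n+1-k}`. -/

open Submodule

section CoordinateSubspaces

variable {n : ℕ}

lemma wvec_eq_single {k : ℕ} (hk : 1 ≤ k ∧ k ≤ 2*n) :
    wvec n k = Pi.single (⟨k - 1, by omega⟩ : Fin (2*n)) 1 := by
  funext i
  simp only [wvec, Pi.single_apply, Fin.ext_iff]
  exact if_congr (by omega) rfl rfl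

lemma prj_wvec (m k : ℕ) : prj n m (wvec n k) = if k = m then 0 else wvec n k := by
  funext i
  by_cases hkm : k = m
  · subst hkm
    simp [prj, wvec]
  · simp only [prj, wvec, LinearMap.coe_mk, AddHom.coe_mk, if_neg hkm]
    split_ifs <;> first | rfl | omega

lemma apply_eq_zero_of_mem_span_wvec {B : Set ℕ} {x : Wsp n} (hx : x ∈ span ℂ (wvec n '' B))
    {i : Fin (2*n)} (hi : (i : ℕ) + 1 ∉ B) : x i = 0 := by
  induction hx using Submodule.span_induction with
  | mem _ h =>
    obtain ⟨k, hk, rfl⟩ := h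
    simp only [wvec, ite_eq_right_iff, one_ne_zero, imp_false]
    rintro rfl
    exact hi hk
  | zero => rfl
  | add _ _ _ _ hx hy => simp [hx, hy]
  | smul _ _ _ hx => simp [hx]

lemma mem_of_wvec_mem_span {B : Set ℕ} {k : ℕ} (hk : 1 ≤ k ∧ k ≤ 2*n)
    (h : wvec n k ∈ span ℂ (wvec n '' B)) : k ∈ B := by
  by_contra hkB
  have := apply_eq_zero_of_mem_span_wvec h (i := ⟨k - 1, by omega⟩)
    (by rwa [Nat.sub_add_cancel hk.1])
  simp [wvec_eq_single hk] at this

lemma span_wvec_le_span_wvec_iff {A : Set ℕ} (hA : ∀ l ∈ A, 1 ≤ l ∧ l ≤ 2*n) (B : Set ℕ) :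
    span ℂ (wvec n '' A) ≤ span ℂ (wvec n '' B) ↔ A ⊆ B := by
  refine ⟨fun h l hl => mem_of_wvec_mem_span (hA l hl) (h (subset_span ⟨l, hl, rfl⟩)),
    fun h => span_mono (Set.image_mono h)⟩

lemma finrank_span_wvec {A : Finset ℕ} (hA : ∀ l ∈ A, 1 ≤ l ∧ l ≤ 2*n) :
    Module.finrank ℂ (span ℂ (wvec n '' (A : Set ℕ))) = A.card := by
  classical
  have hbasis : wvec n '' (A : Set ℕ) ⊆ Set.range (Pi.basisFun ℂ (Fin (2*n))) := by
    rintro _ ⟨k, hk, rfl⟩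
    exact ⟨_, by rw [Pi.basisFun_apply, wvec_eq_single (hA k hk)]⟩
  have hinj : Set.InjOn (wvec n) A := fun k hk l _ hkl =>
    mem_of_wvec_mem_span (B := {l}) (hA k hk) (hkl ▸ subset_span ⟨l, Set.mem_singleton l, rfl⟩)
  rw [← Finset.coe_image, finrank_span_finset_eq_card
    ((Pi.basisFun ℂ _).linearIndependent.linearIndepOn_id.mono (by rwa [Finset.coe_image])),
    Finset.card_image_of_injOn hinj]

lemma map_prj_span_wvec (m : ℕ) (A : Set ℕ) :
    (span ℂ (wvec n '' A)).map (prj n m) = span ℂ (wvec n '' (A \ {m})) := by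
  rw [map_span, Set.image_image]
  apply le_antisymm
  · rw [span_le]
    rintro _ ⟨k, hk, rfl⟩
    simp only [SetLike.mem_coe, prj_wvec]
    split_ifs with hkm
    · exact zero_mem _
    · exact subset_span ⟨k, ⟨hk, hkm⟩, rfl⟩
  · refine span_mono ?_
    rintro _ ⟨k, ⟨hk, hkm : k ≠ m⟩, rfl⟩
    exact ⟨k, hk, by simp only [prj_wvec, if_neg hkm]⟩

lemma map_prj_span_wvec_le_iff {A : Set ℕ} (hA : ∀ l ∈ A, 1 ≤ l ∧ l ≤ 2*n) (m : ℕ) (B : Set ℕ) :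
    (span ℂ (wvec n '' A)).map (prj n m) ≤ span ℂ (wvec n '' B) ↔ A ⊆ B ∪ {m} := by
  rw [map_prj_span_wvec, span_wvec_le_span_wvec_iff (fun l hl => hA l hl.1), Set.sdiff_subset_iff,
    Set.union_comm]

lemma sform_wvec_wvec_compl_ne_zero {k : ℕ} (hk : 1 ≤ k ∧ k ≤ 2*n) :
    sform n (wvec n k) (wvec n (2*n + 1 - k)) ≠ 0 := by
  have hpair : ∀ h, wvec n (2*n + 1 - k) ⟨2*n - 1 - (k - 1), h⟩ = 1 := fun _ =>
    if_pos (by dsimp only; omega)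
  simp [sform, wvec_eq_single hk, Pi.single_apply, hpair, ite_eq_iff]

lemma isIsotropic_span_wvec_iff {A : Set ℕ} (hA : ∀ l ∈ A, 1 ≤ l ∧ l ≤ 2*n) :
    IsIsotropic n (span ℂ (wvec n '' A)) ↔ ∀ k ∈ A, 2*n + 1 - k ∉ A := by
  constructor
  · intro hiso k hk hk'
    exact sform_wvec_wvec_compl_ne_zero (hA k hk)
      (hiso _ (subset_span ⟨k, hk, rfl⟩) _ (subset_span ⟨_, hk', rfl⟩))
  · intro hA' u hu v hv
    refine Finset.sum_eq_zero fun i _ => ?_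
    by_cases hi : (i : ℕ) + 1 ∈ A
    · have hi' : (2*n - 1 - (i : ℕ)) + 1 ∉ A := by
        convert hA' _ hi using 2
        have := i.isLt
        omega
      rw [apply_eq_zero_of_mem_span_wvec hv hi', mul_zero]
    · rw [apply_eq_zero_of_mem_span_wvec hu hi, mul_zero, zero_mul]

end CoordinateSubspaces

theorem statement9_general (n : ℕ) (S : ℕ → ℕ → Finset ℕ)
    (hS : ∀ i j, 1 ≤ i → i ≤ j → i + j ≤ 2*n → ∀ l ∈ S i j, 1 ≤ l ∧ l ≤ 2*n) :
    IsSpR n (fun i j => Submodule.span ℂ (wvec n '' (S i j : Set ℕ))) ↔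
      ((∀ i j, 1 ≤ i → i ≤ j → i + j ≤ 2*n →
          (∀ l ∈ S i j, (1 ≤ l ∧ l ≤ i) ∨ (j + 1 ≤ l ∧ l ≤ 2*n)) ∧ (S i j).card = i) ∧
       (∀ i j, 1 ≤ i → i + 1 ≤ j → (i + 1) + j ≤ 2*n → S i j ⊆ S (i+1) j) ∧
       (∀ i j, 1 ≤ i → i ≤ j → i + (j+1) ≤ 2*n → S i j ⊆ S i (j+1) ∪ {j+1}) ∧
       (∀ i, 1 ≤ i → i ≤ n → ∀ k ∈ S i (2*n - i), (2*n + 1 - k) ∉ S i (2*n - i))) := by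
  constructor
  · rintro ⟨hdim, hsub, hmono, hproj, hisot⟩
    refine ⟨fun i j h1 h2 h3 => ⟨?_, ?_⟩, fun i j h1 h2 h3 => ?_, fun i j h1 h2 h3 => ?_,
      fun i h1 h2 => ?_⟩
    · exact (span_wvec_le_span_wvec_iff (hS i j h1 h2 h3) _).1 (hsub i j h1 h2 h3)
    · exact (finrank_span_wvec (hS i j h1 h2 h3)).symm.trans (hdim i j h1 h2 h3)
    · exact_mod_cast (span_wvec_le_span_wvec_iff (hS i j h1 (by omega) (by omega)) _).1
        (hmono i j h1 h2 h3)
    · exact Finset.coe_subset.1 (by simpa using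
        (map_prj_span_wvec_le_iff (hS i j h1 h2 (by omega)) _ _).1 (hproj i j h1 h2 h3))
    · exact (isIsotropic_span_wvec_iff (hS i _ h1 (by omega) (by omega))).1 (hisot i h1 h2)
  · rintro ⟨hsize, hmono, hproj, hisot⟩
    refine ⟨fun i j h1 h2 h3 => ?_, fun i j h1 h2 h3 => ?_, fun i j h1 h2 h3 => ?_,
      fun i j h1 h2 h3 => ?_, fun i h1 h2 => ?_⟩
    · exact (finrank_span_wvec (hS i j h1 h2 h3)).trans (hsize i j h1 h2 h3).2
    · exact (span_wvec_le_span_wvec_iff (hS i j h1 h2 h3) _).2 (hsize i j h1 h2 h3).1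
    · exact (span_wvec_le_span_wvec_iff (hS i j h1 (by omega) (by omega)) _).2
        (by exact_mod_cast hmono i j h1 h2 h3)
    · exact (map_prj_span_wvec_le_iff (hS i j h1 h2 (by omega)) _ _).2
        (by simpa using Finset.coe_subset.2 (hproj i j h1 h2 h3))
    · exact (isIsotropic_span_wvec_iff (hS i _ h1 (by omega) (by omega))).2 (hisot i h1 h2)

theorem statement9 (n : ℕ) (hn : 1 ≤ n) (S : ℕ → ℕ → Finset ℕ)
    (hS : ∀ i j, 1 ≤ i → i ≤ j → i + j ≤ 2*n → ∀ l ∈ S i j, 1 ≤ l ∧ l ≤ 2*n) :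
    IsSpR n (fun i j => Submodule.span ℂ (wvec n '' (S i j : Set ℕ))) ↔
      ((∀ i j, 1 ≤ i → i ≤ j → i + j ≤ 2*n →
          (∀ l ∈ S i j, (1 ≤ l ∧ l ≤ i) ∨ (j + 1 ≤ l ∧ l ≤ 2*n)) ∧ (S i j).card = i) ∧
       (∀ i j, 1 ≤ i → i + 1 ≤ j → (i + 1) + j ≤ 2*n → S i j ⊆ S (i+1) j) ∧
       (∀ i j, 1 ≤ i → i ≤ j → i + (j+1) ≤ 2*n → S i j ⊆ S i (j+1) ∪ {j+1}) ∧
       (∀ i, 1 ≤ i → i ≤ n → ∀ k ∈ S i (2*n - i), (2*n + 1 - k) ∉ S i (2*n - i))) :=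
  statement9_general n S hS
end
end

section
/- Let (i,j) be an index pair (1 ≤ i ≤ j, i + j ≤ 2n) with j < n or i + j = 2n. Suppose (V_{k,l}) and (V′_{k,l}) are two points of SpR_{2n} that both lie in Z_{i,j} and in no Z_{k,l} with (k,l) ≠ (i,j), and suppose V_{k,k} = V′_{k,k} for all 1 ≤ k ≤ n. Then (V_{k,l}) = (V′_{k,l}). (This says the resolution map SpR_{2n} → Sp𝓕ᵃ_{2n} is injective on the open part Z°_{i,j} of every non-exceptional divisor.) -/
/-!
The entries are recovered column by column from the diagonal. Away from the divisors other than
`Z_{i,j}`, the vector `w_{l+1}` lies in `V_{k,l}` only for `l = j` and `k ≥ i`: otherwise the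
smallest `k'` with `w_{l+1} ∈ V_{k',l}` puts the point on `Z_{k',l}`. Hence generically
`V_{k,l+1} = pr_{l+1}(V_{k,l})` by a dimension count; for `l = j` and `k > i`, `V_{k,j+1}` is the
sum of its hyperplanes `V_{k-1,j+1}` and `pr_{j+1}(V_{k,j})`, which are distinct because the point
is not on `Z_{k,j}`; and `V_{i,j+1} = V_{j+1,j+1} ∩ W_{i,j+1}`. The last identity is where `j < n`
and isotropy enter: if `V_{k+1,c} ⊆ W_{k,c}` with `c ≤ n`, the generic step carries the inclusion
up to `V_{k+1,2n-k-1} ⊆ W_{k,2n-k-1}`, and a `(k+1)`-dimensional isotropic subspace of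
`W_{k,2n-k-1}` contains `w_{2n-k}`, which puts the point on some `Z_{k',2n-k-1}`.
-/

noncomputable section

section

open Submodule Module

variable {n l : ℕ}

lemma Submodule.sup_eq_of_ne_of_finrank_add_one {K E : Type*} [DivisionRing K] [AddCommGroup E]
    [Module K E] [FiniteDimensional K E] {A B C : Submodule K E} (hA : A ≤ C) (hB : B ≤ C)
    (hAB : A ≠ B) (hAC : finrank K A + 1 = finrank K C) (hBC : finrank K B + 1 = finrank K C) :
    A ⊔ B = C := by
  have hlt : A < A ⊔ B := by
    refine lt_of_le_of_ne le_sup_left fun h => hAB ?_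
    exact (eq_of_le_of_finrank_le (sup_eq_left.1 h.symm) (by omega)).symm
  have := finrank_lt_finrank_of_lt hlt
  exact eq_of_le_of_finrank_le (sup_le hA hB) (by omega)

lemma wvec_succ_apply_self (hl : l < 2 * n) : wvec n (l + 1) ⟨l, hl⟩ = 1 := by
  simp [wvec]

lemma wvec_succ_ne_zero (hl : l < 2 * n) : wvec n (l + 1) ≠ 0 := fun h => by
  simpa [h] using wvec_succ_apply_self hl

lemma wvec_succ_eq_basisFun (i : Fin (2 * n)) :
    wvec n (i + 1) = Pi.basisFun ℂ (Fin (2 * n)) i := by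
  ext j
  simp [wvec, Pi.single_apply, Fin.ext_iff, eq_comm]

lemma mem_WIJ {a b : ℕ} {x : Wsp n} :
    x ∈ WIJ n a b ↔ ∀ i : Fin (2 * n), a ≤ i → (i : ℕ) < b → x i = 0 := by
  constructor
  · intro hx i hai hib
    induction hx using span_induction with
    | mem y hy =>
      obtain ⟨k, hk, rfl⟩ := hy
      simp only [Set.mem_ofPred_eq] at hk
      rw [wvec, if_neg (by omega)]
    | zero => rfl
    | add y z _ _ hy hz => simp [hy, hz]
    | smul c y _ hy => simp [hy]
  · intro h
    rw [pi_eq_sum_univ x]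
    refine sum_mem fun i _ => ?_
    by_cases hi : a ≤ i ∧ (i : ℕ) < b
    · simp [h i hi.1 hi.2]
    · have := i.isLt
      refine smul_mem _ _ (subset_span ⟨i + 1, by simp only [Set.mem_ofPred_eq]; omega, ?_⟩)
      ext j
      simp [wvec, Fin.ext_iff, eq_comm]

lemma wvec_succ_notMem_WIJ {a b : ℕ} (hl : l < 2 * n) (hal : a ≤ l) (hlb : l < b) :
    wvec n (l + 1) ∉ WIJ n a b := fun h => by
  simpa [wvec_succ_apply_self hl] using mem_WIJ.1 h ⟨l, hl⟩ hal hlb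

lemma WIJ_mono_left {a a' b : ℕ} (h : a ≤ a') : WIJ n a b ≤ WIJ n a' b := fun _ hx =>
  mem_WIJ.2 fun i hi hib => mem_WIJ.1 hx i (h.trans hi) hib

lemma mem_span_wvec_succ_of_forall_ne (hl : l < 2 * n) {x : Wsp n}
    (hx : ∀ i : Fin (2 * n), (i : ℕ) ≠ l → x i = 0) : x ∈ span ℂ {wvec n (l + 1)} := by
  refine mem_span_singleton.2 ⟨x ⟨l, hl⟩, funext fun i => ?_⟩
  by_cases h : (i : ℕ) = l
  · obtain rfl : i = ⟨l, hl⟩ := Fin.ext h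
    simp [wvec]
  · simp [wvec, h, hx i h]

lemma prj_succ_apply_self (x : Wsp n) (hl : l < 2 * n) : prj n (l + 1) x ⟨l, hl⟩ = 0 := by
  simp [prj]

lemma prj_add_smul_wvec (x : Wsp n) (hl : l < 2 * n) :
    prj n (l + 1) x + x ⟨l, hl⟩ • wvec n (l + 1) = x := by
  funext i
  by_cases h : (i : ℕ) = l
  · obtain rfl : i = ⟨l, hl⟩ := Fin.ext h
    simp [prj, wvec]
  · simp [prj, wvec, h]

lemma wvec_notMem_map_prj (U : Submodule ℂ (Wsp n)) (hl : l < 2 * n) :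
    wvec n (l + 1) ∉ U.map (prj n (l + 1)) := by
  rintro ⟨x, -, hx⟩
  simpa [prj_succ_apply_self, wvec_succ_apply_self hl] using congrFun hx ⟨l, hl⟩

lemma map_prj_sup_span (U : Submodule ℂ (Wsp n)) (hl : l < 2 * n) :
    U.map (prj n (l + 1)) ⊔ span ℂ {wvec n (l + 1)} = U ⊔ span ℂ {wvec n (l + 1)} := by
  have hw (x : Wsp n) : x ⟨l, hl⟩ • wvec n (l + 1) ∈ span ℂ {wvec n (l + 1)} :=
    smul_mem _ _ (mem_span_singleton_self _)
  apply le_antisymm <;> refine sup_le ?_ le_sup_right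
  · rintro _ ⟨x, hx, rfl⟩
    rw [← add_sub_cancel_right (prj n (l + 1) x) (x ⟨l, hl⟩ • wvec n (l + 1)),
      prj_add_smul_wvec x hl]
    exact sub_mem (mem_sup_left hx) (mem_sup_right (hw x))
  · intro x hx
    rw [← prj_add_smul_wvec x hl]
    exact add_mem (mem_sup_left (mem_map_of_mem hx)) (mem_sup_right (hw x))

lemma finrank_map_prj_add_one (U : Submodule ℂ (Wsp n)) (hl : l < 2 * n) :
    finrank ℂ (U.map (prj n (l + 1))) + 1 = finrank ℂ ↥(U ⊔ span ℂ {wvec n (l + 1)}) := by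
  rw [← map_prj_sup_span U hl, finrank_sup_span_singleton (wvec_notMem_map_prj U hl)]

lemma finrank_map_prj_of_notMem {U : Submodule ℂ (Wsp n)} (hl : l < 2 * n)
    (hw : wvec n (l + 1) ∉ U) : finrank ℂ (U.map (prj n (l + 1))) = finrank ℂ U := by
  simpa [finrank_sup_span_singleton hw] using finrank_map_prj_add_one U hl

lemma finrank_map_prj_of_mem {U : Submodule ℂ (Wsp n)} (hl : l < 2 * n)
    (hw : wvec n (l + 1) ∈ U) : finrank ℂ (U.map (prj n (l + 1))) + 1 = finrank ℂ U := by
  rw [finrank_map_prj_add_one U hl, sup_eq_left.2 ((span_singleton_le_iff_mem _ _).2 hw)]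

lemma map_prj_le_of_mem {U : Submodule ℂ (Wsp n)} (hl : l < 2 * n)
    (hw : wvec n (l + 1) ∈ U) : U.map (prj n (l + 1)) ≤ U := by
  calc U.map (prj n (l + 1)) ≤ U.map (prj n (l + 1)) ⊔ span ℂ {wvec n (l + 1)} := le_sup_left
    _ = U := by rw [map_prj_sup_span U hl, sup_eq_left.2 ((span_singleton_le_iff_mem _ _).2 hw)]

lemma map_prj_WIJ_le (a : ℕ) : (WIJ n a l).map (prj n (l + 1)) ≤ WIJ n a (l + 1) := by
  rintro _ ⟨x, hx, rfl⟩
  refine mem_WIJ.2 fun i hai hil => ?_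
  by_cases h : (i : ℕ) = l
  · simp [prj, h]
  · simp [prj, h, mem_WIJ.1 hx i hai (by omega)]

lemma sform_eq_sum_rev (x y : Wsp n) :
    sform n x y = ∑ i : Fin (2 * n), (if (i : ℕ) < n then 1 else -1) * x i * y i.rev := by
  unfold sform
  congr! with i
  simp only [Fin.val_rev]
  omega

def sformBilin (n : ℕ) : LinearMap.BilinForm ℂ (Wsp n) :=
  LinearMap.mk₂ ℂ (sform n)
    (fun x y z => by
      simp only [sform_eq_sum_rev, Pi.add_apply, ← Finset.sum_add_distrib]
      exact Finset.sum_congr rfl fun _ _ => by ring)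
    (fun c x y => by
      simp only [sform_eq_sum_rev, Pi.smul_apply, smul_eq_mul, Finset.mul_sum]
      exact Finset.sum_congr rfl fun _ _ => by ring)
    (fun x y z => by
      simp only [sform_eq_sum_rev, Pi.add_apply, ← Finset.sum_add_distrib]
      exact Finset.sum_congr rfl fun _ _ => by ring)
    (fun c x y => by
      simp only [sform_eq_sum_rev, Pi.smul_apply, smul_eq_mul, Finset.mul_sum]
      exact Finset.sum_congr rfl fun _ _ => by ring)

lemma sform_self (x : Wsp n) : sform n x x = 0 := by
  set f := fun i : Fin (2 * n) => (if (i : ℕ) < n then 1 else -1) * x i * x i.rev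
  have hrev : ∑ i : Fin (2 * n), f i.rev = -∑ i, f i := by
    rw [← Finset.sum_neg_distrib]
    refine Finset.sum_congr rfl fun i _ => ?_
    have := i.isLt
    simp only [f, Fin.rev_rev, Fin.val_rev]
    split_ifs <;> first | omega | ring
  have h : ∑ i : Fin (2 * n), f i.rev = ∑ i, f i := Equiv.sum_comp Fin.revPerm f
  rw [sform_eq_sum_rev]
  linear_combination (-1 / 2 : ℂ) * (hrev.symm.trans h)

lemma sform_wvec_eq_zero_iff (x : Wsp n) {p : ℕ} (hp : p < 2 * n) :
    sform n x (wvec n (2 * n - p)) = 0 ↔ x ⟨p, hp⟩ = 0 := by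
  rw [sform_eq_sum_rev, Finset.sum_eq_single ⟨p, hp⟩]
  · simp only [wvec, Fin.val_rev, show 2 * n - (p + 1) + 1 = 2 * n - p by omega, if_true, mul_one]
    split_ifs <;> simp
  · intro i _ hi
    have hip : (i : ℕ) ≠ p := fun h => hi (Fin.ext h)
    simp only [wvec, Fin.val_rev, show ¬(2 * n - (i + 1) + 1 = 2 * n - p) by omega, if_false,
      mul_zero]
  · simp

lemma sformBilin_nondegenerate : (sformBilin n).Nondegenerate := by
  have hrefl : (sformBilin n).IsRefl := LinearMap.IsAlt.isRefl (B := sformBilin n) sform_self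
  refine hrefl.nondegenerate_iff_separatingLeft.2 fun x hx => funext fun p => ?_
  exact (sform_wvec_eq_zero_iff x p.isLt).1 (hx _)

lemma wvec_mem_of_isIsotropic {k : ℕ} (hk : k < n) {F : Submodule ℂ (Wsp n)}
    (hF : F ≤ WIJ n k (2 * n - (k + 1))) (hdim : finrank ℂ F = k + 1)
    (hiso : IsIsotropic n F) : wvec n (2 * n - (k + 1) + 1) ∈ F := by
  -- `F` and `O = span (w_{k+2}, …, w_{2n-k})` lie in `F^⊥`, of dimension `2n-k-1`, and meet
  -- only in `ℂ w_{2n-k}`.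
  by_contra hw
  let e : Fin (2 * n - 2 * k - 1) → Wsp n := fun t => wvec n (k + 1 + t + 1)
  let O := span ℂ (Set.range e)
  have he : LinearIndependent ℂ e := by
    convert (Pi.basisFun ℂ (Fin (2 * n))).linearIndependent.comp
      (fun t : Fin (2 * n - 2 * k - 1) => (⟨k + 1 + t, by omega⟩ : Fin (2 * n)))
      (fun a b h => by simpa [Fin.ext_iff] using h) using 1
    funext t
    exact wvec_succ_eq_basisFun (⟨k + 1 + t, by omega⟩ : Fin (2 * n))
  have hO : finrank ℂ O = 2 * n - 2 * k - 1 := by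
    rw [finrank_span_eq_card he, Fintype.card_fin]
  have hFF : F ≤ (sformBilin n).orthogonal F := fun f hf =>
    LinearMap.BilinForm.mem_orthogonal_iff.2 fun g hg => hiso g hg f hf
  have hOF : O ≤ (sformBilin n).orthogonal F := by
    refine span_le.2 ?_
    rintro _ ⟨t, rfl⟩
    refine LinearMap.BilinForm.mem_orthogonal_iff.2 fun f hf => ?_
    have hq : 2 * n - (k + t + 2) < 2 * n := by omega
    show sform n f (e t) = 0
    rw [show e t = wvec n (2 * n - (2 * n - (k + t + 2))) by simp only [e]; congr 1; omega,
      sform_wvec_eq_zero_iff f hq]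
    exact mem_WIJ.1 (hF hf) _ (by simp only; omega) (by simp only; omega)
  have hOcoord : O ≤ WIJ n 0 (k + 1) ⊓ WIJ n (2 * n - k) (2 * n) := by
    refine span_le.2 ?_
    rintro _ ⟨t, rfl⟩
    exact ⟨subset_span ⟨_, by simp only [Set.mem_ofPred_eq]; omega, rfl⟩,
      subset_span ⟨_, by simp only [Set.mem_ofPred_eq]; omega, rfl⟩⟩
  have hFO : F ⊓ O = ⊥ := by
    refine eq_bot_iff.2 fun x ⟨hxF, hxO⟩ => (mem_bot ℂ).2 <|
      disjoint_def.1 (disjoint_span_singleton_of_notMem hw) x hxF <|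
        mem_span_wvec_succ_of_forall_ne (by omega) fun i hi => ?_
    obtain ⟨hx₁, hx₂⟩ := hOcoord hxO
    rcases Nat.lt_or_ge i (k + 1) with h | h
    · exact mem_WIJ.1 hx₁ i (Nat.zero_le _) h
    rcases Nat.lt_or_ge i (2 * n - (k + 1)) with h' | h'
    · exact mem_WIJ.1 (hF hxF) i (by omega) h'
    · exact mem_WIJ.1 hx₂ i (by omega) i.isLt
  have hdims := finrank_sup_add_finrank_inf_eq F O
  have hle := finrank_mono (sup_le hFF hOF)
  rw [LinearMap.BilinForm.finrank_orthogonal sformBilin_nondegenerate, finrank_fin_fun] at hle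
  rw [hFO, finrank_bot, hdim, hO] at hdims
  omega

lemma wvec_mem_of_inZ {V : ℕ → ℕ → Submodule ℂ (Wsp n)} {i j : ℕ} (h : InZ n V i j) :
    wvec n (j + 1) ∈ V i j := by
  rw [h]
  exact mem_sup_right (mem_span_singleton_self _)

lemma inZ_one_iff {V : ℕ → ℕ → Submodule ℂ (Wsp n)} :
    InZ n V 1 l ↔ V 1 l = span ℂ {wvec n (l + 1)} := by
  simp [InZ]

lemma inZ_succ_iff {V : ℕ → ℕ → Submodule ℂ (Wsp n)} {k : ℕ} (hk : 1 ≤ k) :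
    InZ n V (k + 1) l ↔ V (k + 1) l = V k (l + 1) ⊔ span ℂ {wvec n (l + 1)} := by
  simp [InZ, show k ≠ 0 by omega]

namespace IsSpR

variable {V : ℕ → ℕ → Submodule ℂ (Wsp n)} {k c : ℕ}

lemma mono_of_le (hV : IsSpR n V) (hk : 1 ≤ k) {m : ℕ} (hkm : k ≤ m) (hml : m ≤ l)
    (h : m + l ≤ 2 * n) : V k l ≤ V m l := by
  induction m, hkm using Nat.le_induction with
  | base => rfl
  | succ m hkm ih =>
    exact (ih (by omega) (by omega)).trans (hV.mono m l (by omega) (by omega) (by omega))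

lemma wvec_self_notMem (hV : IsSpR n V) (hk : 1 ≤ k) (hkl : k ≤ l) (h : k + (l + 1) ≤ 2 * n) :
    wvec n (l + 1) ∉ V k (l + 1) := fun hw =>
  wvec_succ_notMem_WIJ (by omega) hkl (by omega) (hV.sub k (l + 1) hk (by omega) h hw)

lemma eq_map_prj (hV : IsSpR n V) (hk : 1 ≤ k) (hkl : k ≤ l) (h : k + (l + 1) ≤ 2 * n)
    (hw : wvec n (l + 1) ∉ V k l) : V k (l + 1) = (V k l).map (prj n (l + 1)) := by
  refine (eq_of_le_of_finrank_le (hV.proj k l hk hkl h) ?_).symm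
  rw [finrank_map_prj_of_notMem (by omega) hw, hV.dim k l hk hkl (by omega),
    hV.dim k (l + 1) hk (by omega) h]

lemma inZ_one (hV : IsSpR n V) (hl : 1 ≤ l) (h : 1 + l ≤ 2 * n)
    (hw : wvec n (l + 1) ∈ V 1 l) : InZ n V 1 l := by
  refine inZ_one_iff.2 (eq_of_le_of_finrank_le ((span_singleton_le_iff_mem _ _).2 hw) ?_).symm
  rw [hV.dim 1 l le_rfl hl h, finrank_span_singleton (wvec_succ_ne_zero (by omega))]

lemma inZ_succ (hV : IsSpR n V) (hk : 1 ≤ k) (hkl : k + 1 ≤ l) (h : k + 1 + l ≤ 2 * n)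
    (hw : wvec n (l + 1) ∈ V (k + 1) l) (hw' : wvec n (l + 1) ∉ V k l) :
    InZ n V (k + 1) l := by
  have hle : V k (l + 1) ⊔ span ℂ {wvec n (l + 1)} ≤ V (k + 1) l := by
    refine sup_le ?_ ((span_singleton_le_iff_mem _ _).2 hw)
    rw [hV.eq_map_prj hk (by omega) (by omega) hw']
    exact (map_mono (hV.mono k l hk (by omega) (by omega))).trans
      (map_prj_le_of_mem (by omega) hw)
  refine (inZ_succ_iff hk).2 (eq_of_le_of_finrank_le hle ?_).symm
  rw [finrank_sup_span_singleton (hV.wvec_self_notMem hk (by omega) (by omega)),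
    hV.dim k (l + 1) hk (by omega) (by omega), hV.dim (k + 1) l (by omega) hkl h]

lemma exists_inZ_of_wvec_mem (hV : IsSpR n V) (hk : 1 ≤ k) (hkl : k ≤ l) (h : k + l ≤ 2 * n)
    (hw : wvec n (l + 1) ∈ V k l) : ∃ k', 1 ≤ k' ∧ k' ≤ k ∧ InZ n V k' l := by
  induction k, hk using Nat.le_induction with
  | base => exact ⟨1, le_rfl, le_rfl, hV.inZ_one hkl h hw⟩
  | succ k hk ih =>
    by_cases hw' : wvec n (l + 1) ∈ V k l
    · obtain ⟨k', hk', hk'k, hZ⟩ := ih (by omega) (by omega) hw'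
      exact ⟨k', hk', by omega, hZ⟩
    · exact ⟨k + 1, by omega, le_rfl, hV.inZ_succ hk hkl h hw hw'⟩

lemma eq_sup_map_prj (hV : IsSpR n V) (hk : 1 ≤ k) (hkl : k + 1 ≤ l)
    (h : k + 1 + (l + 1) ≤ 2 * n) (hw : wvec n (l + 1) ∈ V (k + 1) l)
    (hZ : ¬InZ n V (k + 1) l) :
    V (k + 1) (l + 1) = V k (l + 1) ⊔ (V (k + 1) l).map (prj n (l + 1)) := by
  have hdim : finrank ℂ (V k (l + 1)) = k := hV.dim k (l + 1) hk (by omega) (by omega)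
  refine (sup_eq_of_ne_of_finrank_add_one (hV.mono k (l + 1) hk (by omega) (by omega))
    (hV.proj (k + 1) l (by omega) hkl (by omega)) (fun he => hZ ?_) ?_ ?_).symm
  · have hle : V (k + 1) l ≤ V k (l + 1) ⊔ span ℂ {wvec n (l + 1)} := by
      rw [he, map_prj_sup_span _ (by omega)]
      exact le_sup_left
    refine (inZ_succ_iff hk).2 (eq_of_le_of_finrank_le hle ?_)
    rw [finrank_sup_span_singleton (hV.wvec_self_notMem hk (by omega) (by omega)), hdim,
      hV.dim (k + 1) l (by omega) hkl (by omega)]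
  · rw [hdim, hV.dim (k + 1) (l + 1) (by omega) (by omega) h]
  · rw [finrank_map_prj_of_mem (by omega) hw, hV.dim (k + 1) l (by omega) hkl (by omega),
      hV.dim (k + 1) (l + 1) (by omega) (by omega) h]

lemma not_le_WIJ (hV : IsSpR n V) (hkc : k + 1 ≤ c) (hc : c ≤ n)
    (hZ : ∀ k' l, 1 ≤ k' → k' ≤ l → k' + l ≤ 2 * n → c ≤ l → ¬InZ n V k' l) :
    ¬V (k + 1) c ≤ WIJ n k c := by
  intro hle
  have hpush : ∀ l, c ≤ l → k + 1 + l ≤ 2 * n → V (k + 1) l ≤ WIJ n k l := by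
    intro l hcl hl
    induction l, hcl using Nat.le_induction with
    | base => exact hle
    | succ l hcl ih =>
      have hw : wvec n (l + 1) ∉ V (k + 1) l := fun hw => by
        obtain ⟨k', hk', hk'k, hz⟩ :=
          hV.exists_inZ_of_wvec_mem (by omega) (by omega) (by omega) hw
        exact hZ k' l hk' (by omega) (by omega) hcl hz
      rw [hV.eq_map_prj (by omega) (by omega) hl hw]
      exact (map_mono (ih (by omega))).trans (map_prj_WIJ_le k)
  have hw := wvec_mem_of_isIsotropic (by omega) (hpush _ (by omega) (by omega))
    (hV.dim (k + 1) _ (by omega) (by omega) (by omega)) (hV.isot (k + 1) (by omega) (by omega))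
  obtain ⟨k', hk', hk'k, hz⟩ := hV.exists_inZ_of_wvec_mem (by omega) (by omega) (by omega) hw
  exact hZ k' _ hk' (by omega) (by omega) (by omega) hz

lemma inf_WIJ_eq (hV : IsSpR n V) (hk : 1 ≤ k) (hkc : k + 1 ≤ c) (hc : c ≤ n)
    (hZ : ∀ k' l, 1 ≤ k' → k' ≤ l → k' + l ≤ 2 * n → c ≤ l → ¬InZ n V k' l) :
    V (k + 1) c ⊓ WIJ n k c = V k c := by
  have hlt := finrank_lt_finrank_of_lt (inf_lt_left.2 (hV.not_le_WIJ hkc hc hZ))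
  rw [hV.dim (k + 1) c (by omega) hkc (by omega)] at hlt
  refine (eq_of_le_of_finrank_le (le_inf (hV.mono k c hk (by omega) (by omega))
    (hV.sub k c hk (by omega) (by omega))) ?_).symm
  rw [hV.dim k c hk (by omega) (by omega)]
  omega

lemma eq_inf_WIJ (hV : IsSpR n V) {i : ℕ} (hi : 1 ≤ i) (hic : i ≤ c) (hc : c ≤ n)
    (hZ : ∀ k' l, 1 ≤ k' → k' ≤ l → k' + l ≤ 2 * n → c ≤ l → ¬InZ n V k' l) :
    V i c = V c c ⊓ WIJ n i c := by
  suffices ∀ m, i ≤ m → m ≤ c → V m c ⊓ WIJ n i c = V i c from (this c hic le_rfl).symm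
  intro m him hmc
  induction m, him using Nat.le_induction with
  | base => exact inf_eq_left.2 (hV.sub i c hi hic (by omega))
  | succ m him ih =>
    calc V (m + 1) c ⊓ WIJ n i c = V (m + 1) c ⊓ WIJ n m c ⊓ WIJ n i c := by
          rw [inf_assoc, inf_eq_right.2 (WIJ_mono_left him)]
      _ = V i c := by rw [hV.inf_WIJ_eq (by omega) hmc hc hZ, ih (by omega)]

end IsSpR

end

/-- The point `V` lies in the open part `Z°_{i,j}` of the divisor `Z_{i,j}`. -/
structure InOpenZ (n : ℕ) (V : ℕ → ℕ → Submodule ℂ (Wsp n)) (i j : ℕ) : Prop where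
  isSpR : IsSpR n V
  inZ : InZ n V i j
  not_inZ : ∀ k l, 1 ≤ k → k ≤ l → k + l ≤ 2 * n → (k, l) ≠ (i, j) → ¬InZ n V k l

namespace InOpenZ

open Submodule

variable {n : ℕ} {V : ℕ → ℕ → Submodule ℂ (Wsp n)} {i j k l : ℕ}

lemma wvec_notMem (h : InOpenZ n V i j) (hk : 1 ≤ k) (hkl : k ≤ l) (hl : k + l ≤ 2 * n)
    (hkj : ¬(l = j ∧ i ≤ k)) : wvec n (l + 1) ∉ V k l := fun hw => by
  obtain ⟨k', hk', hk'k, hz⟩ := h.isSpR.exists_inZ_of_wvec_mem hk hkl hl hw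
  exact h.not_inZ k' l hk' (by omega) (by omega) (by simp only [ne_eq, Prod.mk.injEq]; omega) hz

lemma eq_map_prj (h : InOpenZ n V i j) (hk : 1 ≤ k) (hkl : k ≤ l) (hl : k + (l + 1) ≤ 2 * n)
    (hkj : ¬(l = j ∧ i ≤ k)) : V k (l + 1) = (V k l).map (prj n (l + 1)) :=
  h.isSpR.eq_map_prj hk hkl hl (h.wvec_notMem hk hkl (by omega) hkj)

lemma eq_sup_map_prj (h : InOpenZ n V i j) (hi : 1 ≤ i) (hik : i ≤ k) (hkj : k + 1 ≤ j)
    (hl : k + 1 + (j + 1) ≤ 2 * n) :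
    V (k + 1) (j + 1) = V k (j + 1) ⊔ (V (k + 1) j).map (prj n (j + 1)) :=
  h.isSpR.eq_sup_map_prj (by omega) hkj hl
    (h.isSpR.mono_of_le hi (by omega) hkj (by omega) (wvec_mem_of_inZ h.inZ))
    (h.not_inZ (k + 1) j (by omega) hkj (by omega) (by simp only [ne_eq, Prod.mk.injEq]; omega))

lemma eq_inf_WIJ (h : InOpenZ n V i j) (hi : 1 ≤ i) (hij : i ≤ j + 1) (hjn : j + 1 ≤ n) :
    V i (j + 1) = V (j + 1) (j + 1) ⊓ WIJ n i (j + 1) :=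
  h.isSpR.eq_inf_WIJ hi hij hjn fun k' l hk' hk'l hl hjl =>
    h.not_inZ k' l hk' hk'l hl (by simp only [ne_eq, Prod.mk.injEq]; omega)

end InOpenZ

theorem statement12_general (n i j : ℕ) (hi : 1 ≤ i)
    (hne : j < n ∨ i + j = 2*n)
    (V V' : ℕ → ℕ → Submodule ℂ (Wsp n)) (hV : IsSpR n V) (hV' : IsSpR n V')
    (hZ : InZ n V i j) (hZ' : InZ n V' i j)
    (hO : ∀ k l, 1 ≤ k → k ≤ l → k + l ≤ 2*n → (k, l) ≠ (i, j) → ¬ InZ n V k l)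
    (hO' : ∀ k l, 1 ≤ k → k ≤ l → k + l ≤ 2*n → (k, l) ≠ (i, j) → ¬ InZ n V' k l)
    (hdiag : ∀ k, 1 ≤ k → k ≤ n → V k k = V' k k) :
    ∀ k l, 1 ≤ k → k ≤ l → k + l ≤ 2*n → V k l = V' k l := by
  have hU : InOpenZ n V i j := ⟨hV, hZ, hO⟩
  have hU' : InOpenZ n V' i j := ⟨hV', hZ', hO'⟩
  intro k l hk hkl hl
  induction l generalizing k with
  | zero => omega
  | succ m ihm =>
    rcases hkl.eq_or_lt with rfl | hkm
    · exact hdiag (m + 1) hk (by omega)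
    induction k with
    | zero => omega
    | succ k ihk =>
      by_cases hmj : m = j ∧ i ≤ k + 1
      · obtain ⟨rfl, hik⟩ := hmj
        rcases hik.eq_or_lt with rfl | hik
        · have hmn : m + 1 ≤ n := by omega
          rw [hU.eq_inf_WIJ hi (by omega) hmn, hU'.eq_inf_WIJ hi (by omega) hmn,
            hdiag (m + 1) (by omega) hmn]
        · rw [hU.eq_sup_map_prj hi (by omega) (by omega) hl,
            hU'.eq_sup_map_prj hi (by omega) (by omega) hl,
            ihk (by omega) (by omega) (by omega) (by omega), ihm (k + 1) hk (by omega) (by omega)]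
      · rw [hU.eq_map_prj hk (by omega) hl hmj, hU'.eq_map_prj hk (by omega) hl hmj,
          ihm (k + 1) hk (by omega) (by omega)]

theorem statement12 (n i j : ℕ) (hn : 1 ≤ n) (hi : 1 ≤ i) (hij : i ≤ j)
    (hsum : i + j ≤ 2*n) (hne : j < n ∨ i + j = 2*n)
    (V V' : ℕ → ℕ → Submodule ℂ (Wsp n)) (hV : IsSpR n V) (hV' : IsSpR n V')
    (hZ : InZ n V i j) (hZ' : InZ n V' i j)
    (hO : ∀ k l, 1 ≤ k → k ≤ l → k + l ≤ 2*n → (k, l) ≠ (i, j) → ¬ InZ n V k l)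
    (hO' : ∀ k l, 1 ≤ k → k ≤ l → k + l ≤ 2*n → (k, l) ≠ (i, j) → ¬ InZ n V' k l)
    (hdiag : ∀ k, 1 ≤ k → k ≤ n → V k k = V' k k) :
    ∀ k l, 1 ≤ k → k ≤ l → k + l ≤ 2*n → V k l = V' k l :=
  statement12_general n i j hi hne V V' hV hV' hZ hZ' hO hO' hdiag
end
end

section
/- Let n ≥ 1, let m_1, …, m_n be nonnegative real numbers, and extend them by m_{n+1} = ⋯ = m_{2n−1} = 0. Let (c_{i,j}), indexed by the symplectic index set, be a point of the symplectic FFLV polytope P_sp(m_1,…,m_n). Define (d_{i,j}) for 1 ≤ i ≤ j ≤ 2n−1 by d_{i,j} = c_{i,j} if (i,j) is a symplectic index (i.e. i ≤ n and i + j ≤ 2n) and d_{i,j} = 0 otherwise. Then (d_{i,j}) belongs to the sl_{2n} FFLV polytope P_sl(m_1,…,m_{2n−1}); that is, for every sl Dyck path starting at (i,i) and ending at (j,j) with 1 ≤ i ≤ j ≤ 2n−1, the sum of the d's along the path is at most m_i + m_{i+1} + ⋯ + m_j. -/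
/-- A single Dyck-path step: from `(p,q)` to `(p,q+1)` or `(p+1,q)`. -/
def FFLVDyckStep (p q : ℕ × ℕ) : Prop := q = (p.1, p.2 + 1) ∨ q = (p.1 + 1, p.2)

/-- `β 0, β 1, …, β L` is a Dyck path inside the index set `Idx`. -/
def IsDyckPath (Idx : Set (ℕ × ℕ)) (L : ℕ) (β : ℕ → ℕ × ℕ) : Prop :=
  (∀ t ≤ L, β t ∈ Idx) ∧ (∀ t < L, FFLVDyckStep (β t) (β (t + 1)))

/-- The `sl_{2n}` index set: pairs `(i,j)` with `1 ≤ i ≤ j ≤ 2n-1`. -/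
def slIdx (n : ℕ) : Set (ℕ × ℕ) := {p | 1 ≤ p.1 ∧ p.1 ≤ p.2 ∧ p.2 ≤ 2*n - 1}

/-- The symplectic index set: pairs `(i,j)` with `1 ≤ i ≤ n` and `i ≤ j ≤ 2n-i`. -/
def spIdx (n : ℕ) : Set (ℕ × ℕ) :=
  {p | 1 ≤ p.1 ∧ p.1 ≤ n ∧ p.1 ≤ p.2 ∧ p.2 ≤ 2*n - p.1}

/-- Membership in the `sl_{2n}` FFLV polytope `P_sl(m_1,…,m_{2n-1})`. -/
def MemPsl (n : ℕ) (m : ℕ → ℝ) (d : ℕ → ℕ → ℝ) : Prop :=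
  (∀ i j, 1 ≤ i → i ≤ j → j ≤ 2*n - 1 → 0 ≤ d i j) ∧
  (∀ (L : ℕ) (β : ℕ → ℕ × ℕ), IsDyckPath (slIdx n) L β →
    ∀ i j, β 0 = (i, i) → β L = (j, j) →
      (∑ t ∈ Finset.range (L + 1), d (β t).1 (β t).2) ≤ ∑ l ∈ Finset.Icc i j, m l)

/-- Membership in the symplectic FFLV polytope `P_sp(m_1,…,m_n)`. -/
def MemPsp (n : ℕ) (m : ℕ → ℝ) (c : ℕ → ℕ → ℝ) : Prop :=
  (∀ i j, 1 ≤ i → i ≤ n → i ≤ j → j ≤ 2*n - i → 0 ≤ c i j) ∧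
  (∀ (L : ℕ) (β : ℕ → ℕ × ℕ), IsDyckPath (spIdx n) L β →
    ∀ i j, 1 ≤ i → j ≤ n - 1 → β 0 = (i, i) → β L = (j, j) →
      (∑ t ∈ Finset.range (L + 1), c (β t).1 (β t).2) ≤ ∑ l ∈ Finset.Icc i j, m l) ∧
  (∀ (L : ℕ) (β : ℕ → ℕ × ℕ), IsDyckPath (spIdx n) L β →
    ∀ i j, 1 ≤ i → j ≤ n → β 0 = (i, i) → β L = (j, 2*n - j) →
      (∑ t ∈ Finset.range (L + 1), c (β t).1 (β t).2) ≤ ∑ l ∈ Finset.Icc i n, m l)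

lemma fflv_path_sum (L : ℕ) (β : ℕ → ℕ × ℕ)
    (hstep : ∀ t < L, FFLVDyckStep (β t) (β (t + 1))) :
    ∀ t ≤ L, (β t).1 + (β t).2 = (β 0).1 + (β 0).2 + t := by
  intro t ht
  induction t with
  | zero => simp
  | succ k ih =>
    have hk := ih (by omega)
    rcases hstep k (by omega) with h | h <;> rw [h] <;> simp <;> omega

lemma fflv_path_mono (L : ℕ) (β : ℕ → ℕ × ℕ)
    (hstep : ∀ t < L, FFLVDyckStep (β t) (β (t + 1))) :
    ∀ s t, s ≤ t → t ≤ L → (β s).1 ≤ (β t).1 := by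
  intro s t hst htL
  induction t with
  | zero =>
    have : s = 0 := by omega
    rw [this]
  | succ k ih =>
    rcases Nat.lt_or_ge s (k + 1) with h | h
    · have h1 := ih (by omega) (by omega)
      rcases hstep k (by omega) with h2 | h2 <;> rw [h2] <;> simp <;> omega
    · have : s = k + 1 := by omega
      rw [this]

theorem statement14 (n : ℕ) (hn : 1 ≤ n) (m : ℕ → ℝ)
    (hm : ∀ l, 1 ≤ l → l ≤ n → 0 ≤ m l) (hmz : ∀ l, n < l → m l = 0)
    (c : ℕ → ℕ → ℝ) (hc : MemPsp n m c) :
    MemPsl n m (fun i j => if 1 ≤ i ∧ i ≤ n ∧ i ≤ j ∧ j ≤ 2*n - i then c i j else 0) := by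
  obtain ⟨hc0, hc1, hc2⟩ := hc
  constructor
  · intro i j h1 h2 h3
    dsimp only
    split_ifs with h
    · exact hc0 i j h.1 h.2.1 h.2.2.1 h.2.2.2
    · exact le_refl 0
  · intro L β hβ i j h0 hL
    obtain ⟨hmem, hstep⟩ := hβ
    have hsum : ∀ t ≤ L, (β t).1 + (β t).2 = 2 * i + t := by
      intro t ht
      have := fflv_path_sum L β hstep t ht
      rw [h0] at this; simpa [two_mul] using this
    have hmono := fflv_path_mono L β hstep
    have hi1 : 1 ≤ i := by
      have := hmem 0 (Nat.zero_le _); rw [h0] at this; exact this.1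
    -- basic facts about the endpoint
    have hjL : (β L).1 = j := by rw [hL]
    have hjL2 : (β L).2 = j := by rw [hL]
    by_cases hin : i ≤ n
    · -- main case : i ≤ n
      by_cases hE : ∃ t, t ≤ L ∧ (n < (β t).1 ∨ 2 * n < 2 * i + t)
      · -- the path leaves the symplectic region
        set t0 := Nat.find hE with ht0def
        have ht0 := Nat.find_spec hE
        rw [← ht0def] at ht0
        have hmin : ∀ t < t0, ¬(t ≤ L ∧ (n < (β t).1 ∨ 2 * n < 2 * i + t)) :=
          fun t ht => Nat.find_min hE ht
        have ht0pos : 1 ≤ t0 := by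
          rcases Nat.eq_zero_or_pos t0 with h | h
          · exfalso
            rw [h] at ht0
            have : (β 0).1 = i := by rw [h0]
            omega
          · exact h
        set T := t0 - 1 with hTdef
        have hTL : T < L := by omega
        have hC : ∀ t ≤ T, (β t).1 ≤ n ∧ 2 * i + t ≤ 2 * n := by
          intro t ht
          have h1 := hmin t (by omega)
          push_neg at h1
          exact h1 (by omega)
        have hFail : ∀ t, T < t → t ≤ L → n < (β t).1 ∨ 2 * n < 2 * i + t := by
          intro t ht htL
          rcases ht0.2 with h | h
          · left
            exact lt_of_lt_of_le h (hmono t0 t (by omega) htL)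
          · right; omega
        -- the endpoint of the truncated path
        have hmemT := hmem T (by omega)
        have hTmem : 1 ≤ (β T).1 ∧ (β T).1 ≤ (β T).2 ∧ (β T).2 ≤ 2*n - 1 := hmemT
        have hq : (β T).2 = 2 * n - (β T).1 := by
          rcases ht0.2 with h | h
          · -- p-failure: the step T → t0 increments the first coordinate to n+1
            have hstepT := hstep T (by omega)
            have ht0T : t0 = T + 1 := by omega
            rcases hstepT with h2 | h2
            · exfalso
              rw [ht0T] at h
              rw [h2] at h
              simp at h
              have := (hC T le_rfl).1
              omega
            · have hpn : (β T).1 = n := by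
                rw [ht0T] at h; rw [h2] at h; simp at h
                have := (hC T le_rfl).1
                omega
              have hsT := hsum T (by omega)
              have := (hC T le_rfl).2
              omega
          · -- time-failure: 2i + t0 > 2n, so p+q = 2n at time T
            have hsT := hsum T (by omega)
            have := (hC T le_rfl).2
            omega
        have hpn : (β T).1 ≤ n := (hC T le_rfl).1
        -- the truncated path is a symplectic Dyck path
        have hsp : IsDyckPath (spIdx n) T β := by
          constructor
          · intro t ht
            have hm' := hmem t (by omega)
            have hC' := hC t ht
            have hs' := hsum t (by omega)
            exact ⟨hm'.1, hC'.1, hm'.2.1, by omega⟩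
          · intro t ht; exact hstep t (by omega)
        have hend : β T = ((β T).1, 2*n - (β T).1) := by
          rw [← hq]
        have hkey := hc2 T β hsp i (β T).1 hi1 hpn h0 hend
        -- j > n
        have hjn : n < j := by
          rcases hFail L hTL le_rfl with h | h
          · omega
          · have := hsum L le_rfl; omega
        -- split the sum
        have hsplit : ∑ t ∈ Finset.range (L + 1),
            (fun i j => if 1 ≤ i ∧ i ≤ n ∧ i ≤ j ∧ j ≤ 2*n - i then c i j else 0)
              (β t).1 (β t).2
            = (∑ t ∈ Finset.range (T + 1),
                (if 1 ≤ (β t).1 ∧ (β t).1 ≤ n ∧ (β t).1 ≤ (β t).2 ∧ (β t).2 ≤ 2*n - (β t).1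
                  then c (β t).1 (β t).2 else 0))
              + ∑ t ∈ Finset.Ico (T + 1) (L + 1),
                (if 1 ≤ (β t).1 ∧ (β t).1 ≤ n ∧ (β t).1 ≤ (β t).2 ∧ (β t).2 ≤ 2*n - (β t).1
                  then c (β t).1 (β t).2 else 0) := by
          rw [Finset.range_eq_Ico, ← Finset.sum_Ico_consecutive _ (by omega : 0 ≤ T + 1)
            (by omega : T + 1 ≤ L + 1), ← Finset.range_eq_Ico]
        rw [hsplit]
        have hzero : ∑ t ∈ Finset.Ico (T + 1) (L + 1),
            (if 1 ≤ (β t).1 ∧ (β t).1 ≤ n ∧ (β t).1 ≤ (β t).2 ∧ (β t).2 ≤ 2*n - (β t).1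
              then c (β t).1 (β t).2 else 0) = 0 := by
          apply Finset.sum_eq_zero
          intro t ht
          rw [Finset.mem_Ico] at ht
          have hF := hFail t (by omega) (by omega)
          have hm' := hmem t (by omega)
          have hs' := hsum t (by omega)
          rw [if_neg]
          rintro ⟨_, hb, _, hd⟩
          rcases hF with h | h
          · omega
          · have h1 := hm'.1; have h2 := hm'.2.1; have h3 := hm'.2.2
            omega
        rw [hzero, add_zero]
        have heqc : ∑ t ∈ Finset.range (T + 1),
            (if 1 ≤ (β t).1 ∧ (β t).1 ≤ n ∧ (β t).1 ≤ (β t).2 ∧ (β t).2 ≤ 2*n - (β t).1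
              then c (β t).1 (β t).2 else 0)
            = ∑ t ∈ Finset.range (T + 1), c (β t).1 (β t).2 := by
          apply Finset.sum_congr rfl
          intro t ht
          rw [Finset.mem_range] at ht
          have hm' := hmem t (by omega)
          have hC' := hC t (by omega)
          have hs' := hsum t (by omega)
          rw [if_pos]
          exact ⟨hm'.1, hC'.1, hm'.2.1, by omega⟩
        rw [heqc]
        refine le_trans hkey ?_
        apply le_of_eq
        apply Finset.sum_subset
        · intro l hl
          rw [Finset.mem_Icc] at hl ⊢
          omega
        · intro l hl hl'
          rw [Finset.mem_Icc] at hl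
          rw [Finset.mem_Icc] at hl'
          exact hmz l (by omega)
      · -- the whole path stays in the symplectic region
        push_neg at hE
        have hsp : IsDyckPath (spIdx n) L β := by
          constructor
          · intro t ht
            have hm' := hmem t ht
            have hC' := hE t ht
            have hs' := hsum t ht
            exact ⟨hm'.1, by omega, hm'.2.1, by omega⟩
          · exact hstep
        have heqc : ∑ t ∈ Finset.range (L + 1),
            (fun i j => if 1 ≤ i ∧ i ≤ n ∧ i ≤ j ∧ j ≤ 2*n - i then c i j else 0)
              (β t).1 (β t).2
            = ∑ t ∈ Finset.range (L + 1), c (β t).1 (β t).2 := by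
          apply Finset.sum_congr rfl
          intro t ht
          rw [Finset.mem_range] at ht
          have hm' := hmem t (by omega)
          have hC' := hE t (by omega)
          have hs' := hsum t (by omega)
          simp only
          rw [if_pos]
          exact ⟨hm'.1, by omega, hm'.2.1, by omega⟩
        rw [heqc]
        have hjn : j ≤ n := by
          have := hE L le_rfl
          omega
        rcases Nat.lt_or_ge j n with hjlt | hjge
        · exact hc1 L β hsp i j hi1 (by omega) h0 hL
        · have hjeq : j = n := by omega
          have hend : β L = (n, 2*n - n) := by
            rw [hL, hjeq]
            congr 1
            omega
          have := hc2 L β hsp i n hi1 le_rfl h0 hend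
          rw [hjeq]
          exact this
    · -- trivial case : i > n, all d-values along the path vanish
      have hz : ∑ t ∈ Finset.range (L + 1),
          (fun i j => if 1 ≤ i ∧ i ≤ n ∧ i ≤ j ∧ j ≤ 2*n - i then c i j else 0)
            (β t).1 (β t).2 = 0 := by
        apply Finset.sum_eq_zero
        intro t ht
        rw [Finset.mem_range] at ht
        have hp : i ≤ (β t).1 := by
          have := hmono 0 t (Nat.zero_le _) (by omega)
          rw [h0] at this; exact this
        simp only
        rw [if_neg]
        rintro ⟨_, hb, _, _⟩
        omega
      rw [hz]
      rw [Finset.sum_eq_zero]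
      intro l hl
      rw [Finset.mem_Icc] at hl
      exact hmz l (by omega)
end

section
/- Let (i,j) be an index pair with j < n, and let (V_{k,l}) be a point of SpR_{2n} lying in Z_{i,j} and in no Z_{k,l} with (k,l) ≠ (i,j). If (k,l) is an index pair such that w_{l+1} ∈ V_{k,l}, then l = j and i ≤ k ≤ j. -/
noncomputable section

lemma wvec_ne_zero (n k : ℕ) (h1 : 1 ≤ k) (h2 : k ≤ 2*n) : wvec n k ≠ 0 := by
  intro h
  have := congrFun h ⟨k-1, by omega⟩
  simp only [wvec, Pi.zero_apply] at this
  rw [if_pos (by omega)] at this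
  exact one_ne_zero this

lemma prj_decomp (n l : ℕ) (h : l < 2*n) (x : Wsp n) :
    x = prj n (l+1) x + x ⟨l, h⟩ • wvec n (l+1) := by
  funext i
  simp only [Pi.add_apply, Pi.smul_apply, prj, LinearMap.coe_mk, AddHom.coe_mk, wvec,
    smul_eq_mul]
  by_cases hi : (i : ℕ) + 1 = l + 1
  · have hieq : i = ⟨l, h⟩ := Fin.ext (show (i : ℕ) = l by omega)
    rw [if_pos hi, if_pos hi, hieq]; ring
  · rw [if_neg hi, if_neg hi]; ring

lemma exists_min_InZ (n : ℕ) (V : ℕ → ℕ → Submodule ℂ (Wsp n)) (hV : IsSpR n V) :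
    ∀ k l, 1 ≤ k → k ≤ l → k + l ≤ 2*n → wvec n (l+1) ∈ V k l →
    ∃ k₀, 1 ≤ k₀ ∧ k₀ ≤ k ∧ InZ n V k₀ l := by
  intro k
  induction k with
  | zero => intro l h; omega
  | succ m ih =>
    intro l hk hkl hsum hw
    have hwne : wvec n (l+1) ≠ 0 := wvec_ne_zero n (l+1) (by omega) (by omega)
    have hspan1 : Module.finrank ℂ (Submodule.span ℂ {wvec n (l+1)}) = 1 :=
      finrank_span_singleton hwne
    by_cases hm : m = 0
    · subst hm
      refine ⟨1, le_refl 1, le_refl 1, ?_⟩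
      have hle : Submodule.span ℂ {wvec n (l+1)} ≤ V 1 l :=
        (Submodule.span_singleton_le_iff_mem _ _).mpr hw
      have heq : Submodule.span ℂ {wvec n (l+1)} = V 1 l :=
        Submodule.eq_of_le_of_finrank_le hle
          (by rw [hV.dim 1 l le_rfl hkl hsum, hspan1])
      rw [InZ, if_pos rfl, bot_sup_eq, heq]
    · by_cases hw' : wvec n (l+1) ∈ V m l
      · obtain ⟨k₀, h1, h2, h3⟩ := ih l (by omega) (by omega) (by omega) hw'
        exact ⟨k₀, h1, by omega, h3⟩
      · refine ⟨m+1, by omega, le_rfl, ?_⟩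
        -- Step A : V m l ⊔ span = V (m+1) l
        have hmono : V m l ≤ V (m+1) l := hV.mono m l (by omega) hkl hsum
        have hleA : V m l ⊔ Submodule.span ℂ {wvec n (l+1)} ≤ V (m+1) l :=
          sup_le hmono ((Submodule.span_singleton_le_iff_mem _ _).mpr hw)
        have hlt : V m l < V m l ⊔ Submodule.span ℂ {wvec n (l+1)} :=
          left_lt_sup.mpr (fun h => hw' (h (Submodule.mem_span_singleton_self _)))
        have hrank : m < Module.finrank ℂ (V m l ⊔ Submodule.span ℂ {wvec n (l+1)} :
            Submodule ℂ (Wsp n)) := by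
          have h1 := Submodule.finrank_lt_finrank_of_lt hlt
          rw [hV.dim m l (by omega) (by omega) (by omega)] at h1
          exact h1
        have hA : V m l ⊔ Submodule.span ℂ {wvec n (l+1)} = V (m+1) l :=
          Submodule.eq_of_le_of_finrank_le hleA
            (by rw [hV.dim (m+1) l (by omega) hkl hsum]; omega)
        -- Step B : V (m+1) l ≤ V m (l+1) ⊔ span
        have hproj : Submodule.map (prj n (l+1)) (V m l) ≤ V m (l+1) :=
          hV.proj m l (by omega) (by omega) (by omega)
        have hB : V (m+1) l ≤ V m (l+1) ⊔ Submodule.span ℂ {wvec n (l+1)} := by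
          intro v hv
          rw [← hA] at hv
          obtain ⟨u, hu, c, hc, rfl⟩ := Submodule.mem_sup.mp hv
          have hu1 : prj n (l+1) u ∈ V m (l+1) :=
            hproj (Submodule.mem_map_of_mem hu)
          have hdec := prj_decomp n l (by omega) u
          rw [hdec]
          exact Submodule.add_mem _ (Submodule.add_mem _ (Submodule.mem_sup_left hu1)
            (Submodule.mem_sup_right
              (Submodule.smul_mem _ _ (Submodule.mem_span_singleton_self _))))
            (Submodule.mem_sup_right hc)
        -- conclude
        have hC : Module.finrank ℂ (V m (l+1) ⊔ Submodule.span ℂ {wvec n (l+1)} :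
            Submodule ℂ (Wsp n)) ≤ m + 1 := by
          have := Nat.le.intro
            (Submodule.finrank_sup_add_finrank_inf_eq (V m (l+1))
              (Submodule.span ℂ {wvec n (l+1)}))
          rw [hV.dim m (l+1) (by omega) (by omega) (by omega), hspan1] at this
          exact this
        have heq : V (m+1) l = V m (l+1) ⊔ Submodule.span ℂ {wvec n (l+1)} :=
          Submodule.eq_of_le_of_finrank_le hB
            (by rw [hV.dim (m+1) l (by omega) hkl hsum]; exact hC)
        rw [InZ, if_neg (by omega), Nat.add_sub_cancel]
        exact heq

theorem statement16 (n i j : ℕ) (hn : 1 ≤ n) (hi : 1 ≤ i) (hij : i ≤ j)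
    (hjn : j < n)
    (V : ℕ → ℕ → Submodule ℂ (Wsp n)) (hV : IsSpR n V) (hZ : InZ n V i j)
    (hO : ∀ k l, 1 ≤ k → k ≤ l → k + l ≤ 2*n → (k, l) ≠ (i, j) → ¬ InZ n V k l) :
    ∀ k l, 1 ≤ k → k ≤ l → k + l ≤ 2*n → wvec n (l + 1) ∈ V k l →
      l = j ∧ i ≤ k ∧ k ≤ j := by
  intro k l hk hkl hsum hw
  obtain ⟨k₀, h1, h2, h3⟩ := exists_min_InZ n V hV k l hk hkl hsum hw
  by_cases hne : (k₀, l) = (i, j)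
  · obtain ⟨hki, hlj⟩ := Prod.mk.injEq .. ▸ hne
    have hki : k₀ = i := by injection hne
    have hlj : l = j := by injection hne
    exact ⟨hlj, by omega, by omega⟩
  · exact absurd h3 (hO k₀ l h1 (by omega) (by omega) hne)
end
end
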